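/- arXiv:2304.11941 — 2 statements merged into one kernel-verified Lean document; each statement's English description precedes it below -/
import Mathlib

section
/- Let G be a finite DAG with unique source s and unique sink t, and let p and q be two distinct vertices each lying on every path from s to t, with LP(p) < LP(q). Then every path from s to t visits p before q. -/
/-!
Extending a longest `s`-`u` path by an edge `u → v` shows `LP u < LP v`, so `LP` strictly
increases along every path. On an `s`-`t` path through both `p` and `q`, the one with the
smaller `LP` must therefore come first.
-/

/-- `l` is a directed path from `s` to `v` in the digraph with adjacency relation `adj`. -/
def IsPathFrom {V : Type*} (adj : V → V → Prop) (s v : V) (l : List V) : Prop :=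
  l ≠ [] ∧ l.Chain' adj ∧ l.head? = some s ∧ l.getLast? = some v

/-- `LP v` is the length (number of edges) of a longest directed path from `s` to `v`. -/
def IsLongestPathLen {V : Type*} (adj : V → V → Prop) (s : V) (LP : V → ℕ) : Prop :=
  ∀ v, (∃ l, IsPathFrom adj s v l ∧ l.length - 1 = LP v) ∧
    ∀ l, IsPathFrom adj s v l → l.length - 1 ≤ LP v

section LongestPath

variable {V : Type*} {adj : V → V → Prop} {s u v : V}

theorem IsPathFrom.concat {l : List V} (hl : IsPathFrom adj s u l) (huv : adj u v) :
    IsPathFrom adj s v (l ++ [v]) := by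
  obtain ⟨hne, hchain, hhead, hlast⟩ := hl
  refine ⟨by simp, ?_, by rwa [List.head?_append_of_ne_nil _ hne], by simp⟩
  refine List.isChain_append.mpr ⟨hchain, List.isChain_singleton v, ?_⟩
  simp_all

theorem IsLongestPathLen.lt_of_adj {LP : V → ℕ} (hLP : IsLongestPathLen adj s LP)
    (huv : adj u v) : LP u < LP v := by
  obtain ⟨l, hl, hlen⟩ := (hLP u).1
  have hpos : 0 < l.length := List.length_pos_iff.mpr hl.1
  have hext := (hLP v).2 _ (hl.concat huv)
  rw [List.length_append, List.length_singleton] at hext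
  omega

theorem IsLongestPathLen.pairwise_lt_of_isChain {LP : V → ℕ}
    (hLP : IsLongestPathLen adj s LP) {l : List V} (hl : l.IsChain adj) :
    l.Pairwise (LP · < LP ·) :=
  (hl.imp fun _ _ => hLP.lt_of_adj).pairwise

end LongestPath

theorem List.Pairwise.rel_of_idxOf_lt {α : Type*} [DecidableEq α] {R : α → α → Prop}
    {l : List α} (hl : l.Pairwise R) {a b : α} (hb : b ∈ l) (hab : l.idxOf a < l.idxOf b) :
    R a b := by
  have hb' := List.idxOf_lt_length_iff.mpr hb
  simpa [List.getElem_idxOf] using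
    List.pairwise_iff_getElem.mp hl _ _ (hab.trans hb') hb' hab

theorem partition_points_ordered_general {V : Type*} [DecidableEq V]
    (adj : V → V → Prop) (s t p q : V)
    (LP : V → ℕ) (hLP : IsLongestPathLen adj s LP)
    (hpq : p ≠ q) (hLPpq : LP p < LP q)
    (hp : ∀ l, IsPathFrom adj s t l → p ∈ l)
    (hq : ∀ l, IsPathFrom adj s t l → q ∈ l) :
    ∀ l, IsPathFrom adj s t l → l.idxOf p < l.idxOf q := by
  intro l hl
  have hmono := hLP.pairwise_lt_of_isChain hl.2.1
  by_contra! hqp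
  have hlt : l.idxOf q < l.idxOf p :=
    hqp.lt_of_ne fun h => hpq ((List.idxOf_inj (hq l hl)).mp h).symm
  exact (hmono.rel_of_idxOf_lt (hp l hl) hlt).asymm hLPpq

/-- In a finite DAG with unique source `s` and unique sink `t`, if the two
distinct vertices `p` and `q` each lie on every `s`-`t` path and `LP p < LP q`, then every
`s`-`t` path visits `p` before `q` (the index of `p` is smaller than the index of `q`). -/
theorem partition_points_ordered {V : Type*} [Fintype V] [DecidableEq V]
    (adj : V → V → Prop) (s t p q : V)
    (hacyc : ∀ x, ¬ Relation.TransGen adj x x)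
    (hsource : ∀ u, ¬ adj u s) (hsink : ∀ u, ¬ adj t u)
    (LP : V → ℕ) (hLP : IsLongestPathLen adj s LP)
    (hpq : p ≠ q) (hLPpq : LP p < LP q)
    (hp : ∀ l, IsPathFrom adj s t l → p ∈ l)
    (hq : ∀ l, IsPathFrom adj s t l → q ∈ l) :
    ∀ l, IsPathFrom adj s t l → l.idxOf p < l.idxOf q :=
  partition_points_ordered_general adj s t p q LP hLP hpq hLPpq hp hq
end

section
/- Let G be a finite DAG with unique source s and unique sink t where every vertex lies on an s-t path. The set of vertices that lie on every s-t path, ordered by topological depth LP, forms a chain: for any two such vertices p ≠ q, either every s-t path visits p before q or every s-t path visits q before p. -/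
theorem List.IsChain.nodup_of_acyclic {α : Type*} {R : α → α → Prop} {l : List α}
    (hl : l.IsChain R) (hR : ∀ x, ¬ Relation.TransGen R x x) : l.Nodup := by
  refine (List.isChain_iff_pairwise.1 (hl.imp fun _ _ => Relation.TransGen.single)).imp ?_
  rintro x _ hxy rfl
  exact hR x hxy

theorem List.take_idxOf_append_cons_drop {α : Type*} [DecidableEq α] {l : List α} {a : α}
    (ha : a ∈ l) : l.take (l.idxOf a) ++ a :: l.drop (l.idxOf a + 1) = l := by
  conv_rhs => rw [← l.take_append_drop (l.idxOf a)]
  rw [← List.getElem_cons_drop (List.idxOf_lt_length_of_mem ha), List.getElem_idxOf]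

theorem IsPathFrom.splice {V : Type*} {adj : V → V → Prop} {s t s' t' p : V}
    {a b c d : List V} (h₁ : IsPathFrom adj s t (a ++ p :: b))
    (h₂ : IsPathFrom adj s' t' (c ++ p :: d)) : IsPathFrom adj s t' (a ++ p :: d) := by
  obtain ⟨-, hchain₁, hhead, -⟩ := h₁
  obtain ⟨-, hchain₂, -, hlast⟩ := h₂
  refine ⟨by simp, show List.IsChain adj _ from ?_, ?_, ?_⟩
  · have hl : (a ++ [p]).IsChain adj := hchain₁.prefix ⟨b, by simp⟩
    have hr : ([p] ++ d).IsChain adj := hchain₂.suffix ⟨c, by simp⟩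
    simpa using (hl.append_overlap hr (List.cons_ne_nil p []) : List.IsChain adj _)
  · simpa [List.head?_append] using hhead
  · simpa [List.getLast?_append] using hlast

theorem IsPathFrom.nodup {V : Type*} {adj : V → V → Prop} {s t : V} {l : List V}
    (hacyc : ∀ x, ¬ Relation.TransGen adj x x) (h : IsPathFrom adj s t l) : l.Nodup :=
  List.IsChain.nodup_of_acyclic h.2.1 hacyc

theorem IsPathFrom.idxOf_lt_of_idxOf_lt {V : Type*} [DecidableEq V] {adj : V → V → Prop}
    (hacyc : ∀ x, ¬ Relation.TransGen adj x x) {s t p q : V} {l₁ l₂ : List V}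
    (hq : ∀ l, IsPathFrom adj s t l → q ∈ l) (h₁ : IsPathFrom adj s t l₁)
    (h₂ : IsPathFrom adj s t l₂) (hp₁ : p ∈ l₁) (hp₂ : p ∈ l₂)
    (hpq : l₁.idxOf p < l₁.idxOf q) : l₂.idxOf p < l₂.idxOf q := by
  by_contra! hqp
  have hq_ne : q ≠ p := by rintro rfl; omega
  have hq_take₁ : q ∉ l₁.take (l₁.idxOf p) := fun h => by
    have := (List.mem_take_iff_idxOf_lt (List.mem_of_mem_take h)).1 h
    omega
  have hq_drop₂ : q ∉ l₂.drop (l₂.idxOf p + 1) := by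
    have hnodup := h₂.nodup hacyc
    rw [← List.take_append_drop (l₂.idxOf p + 1) l₂] at hnodup
    exact List.disjoint_of_nodup_append hnodup
      ((List.mem_take_iff_idxOf_lt (hq _ h₂)).2 (by omega))
  rw [← List.take_idxOf_append_cons_drop hp₁] at h₁
  rw [← List.take_idxOf_append_cons_drop hp₂] at h₂
  simpa [hq_ne, hq_take₁, hq_drop₂] using hq _ (h₁.splice h₂)

theorem partition_points_form_chain_general {V : Type*} [DecidableEq V]
    (adj : V → V → Prop) (s t : V)
    (hacyc : ∀ x, ¬ Relation.TransGen adj x x) :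
    ∀ p q, p ≠ q →
      (∀ l, IsPathFrom adj s t l → p ∈ l) →
      (∀ l, IsPathFrom adj s t l → q ∈ l) →
      (∀ l, IsPathFrom adj s t l → l.idxOf p < l.idxOf q) ∨
      (∀ l, IsPathFrom adj s t l → l.idxOf q < l.idxOf p) := by
  intro p q hpq hp hq
  by_cases hforall : ∀ l, IsPathFrom adj s t l → l.idxOf p < l.idxOf q
  · exact Or.inl hforall
  push Not at hforall
  obtain ⟨l₀, hl₀, hqp⟩ := hforall
  have hqp : l₀.idxOf q < l₀.idxOf p :=
    hqp.lt_of_ne fun h => hpq ((List.idxOf_inj (hp l₀ hl₀)).1 h.symm)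
  exact Or.inr fun l hl => hl₀.idxOf_lt_of_idxOf_lt hacyc hp hl (hq l₀ hl₀) (hq l hl) hqp

/-- In a finite DAG with unique source `s` and unique sink `t` where every
vertex lies on an `s`-`t` path, the vertices lying on every `s`-`t` path form a chain:
for any two distinct such vertices `p ≠ q`, either every `s`-`t` path visits `p` before
`q`, or every `s`-`t` path visits `q` before `p`. -/
theorem partition_points_form_chain {V : Type*} [Fintype V] [DecidableEq V]
    (adj : V → V → Prop) (s t : V)
    (hacyc : ∀ x, ¬ Relation.TransGen adj x x)
    (hsource : ∀ u, ¬ adj u s) (hsink : ∀ u, ¬ adj t u)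
    (hcover : ∀ w, ∃ l, IsPathFrom adj s t l ∧ w ∈ l)
    (LP : V → ℕ) (hLP : IsLongestPathLen adj s LP) :
    ∀ p q, p ≠ q →
      (∀ l, IsPathFrom adj s t l → p ∈ l) →
      (∀ l, IsPathFrom adj s t l → q ∈ l) →
      (∀ l, IsPathFrom adj s t l → l.idxOf p < l.idxOf q) ∨
      (∀ l, IsPathFrom adj s t l → l.idxOf q < l.idxOf p) :=
  partition_points_form_chain_general adj s t hacyc
end
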